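/- In the unique right-increasing Pieri chain from u to v (when u →ᵖ v), the last step u^{p-1} →¹ v is determined as follows: j is the largest index with u_j ≠ v_j, the pair (u_j, v_j) determines the type of the rule applied, i is the largest index with i < j and v_i not in the middle set S of that rule type, and u^{p-1} is obtained from v by applying the inverse rule at positions (i,j). -/

import Mathlib

inductive PieriType | A | B | C | D | E | F
deriving DecidableEq

open PieriType in
/-- The 15 rules of Table 1: (type, (a₁,b₁), S, (a₂,b₂)). -/
def pieriRules : List (PieriType × (ℕ × ℕ) × List ℕ × (ℕ × ℕ)) :=
  [ (A, (0,2), [], (2,0)),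
    (B, (3,2), [0], (2,3)),
    (C, (0,4), [0], (4,0)),
    (D, (1,2), [0], (2,1)),
    (D, (1,2), [0,3], (5,7)),
    (D, (7,5), [0,3], (2,1)),
    (D, (7,5), [0,3], (5,7)),
    (E, (1,4), [0,2], (4,1)),
    (E, (1,4), [0,2], (2,3)),
    (E, (3,5), [0,2], (4,1)),
    (E, (3,5), [0,2], (2,3)),
    (F, (0,5), [], (5,0)),
    (F, (0,5), [0,2,4], (6,1)),
    (F, (1,6), [0,2,4], (5,0)),
    (F, (1,6), [0,2,4], (6,1)) ]

/-- `u →¹ v` with index `(i,j)` using a rule of the given type. -/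
def PieriStep (u v : List ℕ) (i j : ℕ) (ty : PieriType) : Prop :=
  ∃ r ∈ pieriRules, r.1 = ty ∧ i < j ∧ j < u.length ∧ v.length = u.length ∧
    u.getD i 8 = r.2.1.1 ∧ v.getD i 8 = r.2.1.2 ∧
    u.getD j 8 = r.2.2.2.1 ∧ v.getD j 8 = r.2.2.2.2 ∧
    (∀ k, i < k → k < j → u.getD k 8 ∈ r.2.2.1) ∧
    (∀ k, k ≠ i → k ≠ j → u.getD k 8 = v.getD k 8)

/-- A Pieri chain: consecutive steps with the crossing condition `i_s < j_t` for `s ≤ t`. -/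
def IsPieriChain (L : List (List ℕ)) (idx : ℕ → ℕ × ℕ) (ty : ℕ → PieriType) : Prop :=
  (∀ t, t + 1 < L.length →
      PieriStep (L.getD t []) (L.getD (t+1) []) (idx t).1 (idx t).2 (ty t)) ∧
  (∀ s t, s ≤ t → t + 1 < L.length → (idx s).1 < (idx t).2)

/-- `u →ᵖ v` : there is a Pieri chain of length `p` from `u` to `v`. -/
def PieriRel (p : ℕ) (u v : List ℕ) : Prop :=
  ∃ L idx ty, L.length = p + 1 ∧ L.getD 0 [] = u ∧ L.getD p [] = v ∧ IsPieriChain L idx ty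

/-- A chain is right-increasing if `j₁ < j₂ < ⋯ < j_p`. -/
def RightIncreasing (L : List (List ℕ)) (idx : ℕ → ℕ × ℕ) : Prop :=
  ∀ s t, s < t → t + 1 < L.length → (idx s).2 < (idx t).2

def IsLabelString (u : List ℕ) : Prop := ∀ x ∈ u, x ≤ 7
def Is012String (u : List ℕ) : Prop := ∀ x ∈ u, x ≤ 2

/-!
Steps before the last one have right index below `j = j_p`, and every left index lies below
its own right index, so no earlier step touches a position `≥ j`. Hence `u^{p-1}` and `u`
agree from `j` on, and the last step changes nothing beyond `j`. The remaining claims are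
read off the last step, using two facts about Table 1: the right pair of each rule has
`a₂ ≠ b₂`, and its new left label `b₁` never lies in its middle set `S`.
-/

lemma pieriRules_right_ne {r : PieriType × (ℕ × ℕ) × List ℕ × (ℕ × ℕ)} (hr : r ∈ pieriRules) :
    r.2.2.2.1 ≠ r.2.2.2.2 := by
  fin_cases hr <;> decide

lemma pieriRules_left_not_mem_middle {r : PieriType × (ℕ × ℕ) × List ℕ × (ℕ × ℕ)}
    (hr : r ∈ pieriRules) : r.2.1.2 ∉ r.2.2.1 := by
  fin_cases hr <;> decide

namespace IsPieriChain

variable {L : List (List ℕ)} {idx : ℕ → ℕ × ℕ} {ty : ℕ → PieriType}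

lemma getD_eq_of_untouched (hch : IsPieriChain L idx ty) {m T : ℕ} (hT : T < L.length)
    (h : ∀ t < T, (idx t).1 ≠ m ∧ (idx t).2 ≠ m) :
    (L.getD T []).getD m 8 = (L.getD 0 []).getD m 8 := by
  induction T with
  | zero => rfl
  | succ T ih =>
    obtain ⟨-, -, -, -, -, -, -, -, -, -, -, hoff⟩ := hch.1 T hT
    obtain ⟨hi, hj⟩ := h T T.lt_succ_self
    rw [← hoff m hi.symm hj.symm, ih (by omega) fun t ht => h t (by omega)]

lemma getD_eq_of_right_le (hch : IsPieriChain L idx ty) (hri : RightIncreasing L idx)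
    {m T : ℕ} (hT : T + 1 < L.length) (hm : (idx T).2 ≤ m) :
    (L.getD T []).getD m 8 = (L.getD 0 []).getD m 8 := by
  refine hch.getD_eq_of_untouched (by omega) fun t ht => ?_
  obtain ⟨-, -, -, hij, -⟩ := hch.1 t (by omega)
  have hjj := hri t T ht hT
  omega

end IsPieriChain

/-- Reconstruction of the last step of the unique right-increasing Pieri chain:
j = (idx (p-1)).2 is the largest index where u and v differ, the rule used has right
pair (u_j, v_j), i is the largest index below j with v_i outside the middle set S,
and u^{p-1} is obtained from v by applying the inverse rule at positions (i,j). -/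
theorem last_step_reconstruction (u v : List ℕ) (p : ℕ) (hp : 1 ≤ p)
    (L : List (List ℕ)) (idx : ℕ → ℕ × ℕ) (ty : ℕ → PieriType)
    (hlen : L.length = p + 1) (h0 : L.getD 0 [] = u) (hpv : L.getD p [] = v)
    (hch : IsPieriChain L idx ty) (hri : RightIncreasing L idx) :
    (u.getD (idx (p-1)).2 8 ≠ v.getD (idx (p-1)).2 8 ∧
      ∀ m, (idx (p-1)).2 < m → m < u.length → u.getD m 8 = v.getD m 8) ∧
    (L.getD (p-1) []).getD (idx (p-1)).2 8 = u.getD (idx (p-1)).2 8 ∧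
    ∃ r ∈ pieriRules, r.1 = ty (p-1) ∧
      r.2.2.2.1 = u.getD (idx (p-1)).2 8 ∧ r.2.2.2.2 = v.getD (idx (p-1)).2 8 ∧
      v.getD (idx (p-1)).1 8 ∉ r.2.2.1 ∧
      (∀ m, (idx (p-1)).1 < m → m < (idx (p-1)).2 → v.getD m 8 ∈ r.2.2.1) ∧
      (L.getD (p-1) []).getD (idx (p-1)).1 8 = r.2.1.1 ∧
      v.getD (idx (p-1)).1 8 = r.2.1.2 ∧
      (∀ m, m ≠ (idx (p-1)).1 → m ≠ (idx (p-1)).2 →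
        (L.getD (p-1) []).getD m 8 = v.getD m 8) := by
  have hlast : p - 1 + 1 < L.length := by omega
  obtain ⟨r, hr, hty, hij, -, -, hwi, hvi, hwj, hvj, hmid, hoff⟩ := hch.1 (p - 1) hlast
  rw [Nat.sub_add_cancel hp, hpv] at hvi hvj hoff
  have hfix : ∀ m, (idx (p-1)).2 ≤ m → (L.getD (p-1) []).getD m 8 = u.getD m 8 := fun m hm =>
    h0 ▸ hch.getD_eq_of_right_le hri hlast hm
  refine ⟨⟨?_, fun m hm _ => ?_⟩, hfix _ le_rfl, r, hr, hty, ?_, hvj.symm, ?_,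
    fun m him hmj => ?_, hwi, hvi, hoff⟩
  · rw [← hfix _ le_rfl, hwj, hvj]
    exact pieriRules_right_ne hr
  · rw [← hfix m hm.le, hoff m (by omega) (by omega)]
  · rw [← hfix _ le_rfl, hwj]
  · rw [hvi]
    exact pieriRules_left_not_mem_middle hr
  · rw [← hoff m (by omega) (by omega)]
    exact hmid m him hmj
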